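/- If h and k are positive integers with gcd(h,k) = 1, then s(h,k) + s(k,h) = (h² + k² - 3hk + 1)/(12hk). -/

import Mathlib

noncomputable def dedekindSum (h k : ℤ) : ℝ :=
  ∑ r ∈ Finset.Ico (1 : ℤ) k,
    ((r : ℝ) / k) * ((h * r : ℝ) / k - ⌊(h * r : ℝ) / k⌋ - 1 / 2)

/-!
Put `q_r = ⌊hr/k⌋` and `A(h,k) = ∑_{0<r<k} r q_r`. Then
`12 k s(h,k) = 2h(k-1)(2k-1) - 3k(k-1) - 12 A(h,k)`, so the theorem amounts to a closed form for
`h A(h,k) + k A(k,h)`. Counting the lattice points `0 < r < k`, `0 < s < h`, `ks < hr` with weight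
`r`, first by rows and then by columns, expresses `A(h,k)` through `∑ q'_s` and `∑ q'_s²`, where
`q'_s = ⌊ks/h⌋`. Since `s ↦ ks mod h` permutes `0 < s < h`, writing `h q'_s = ks - (ks mod h)` and
summing gives `∑ q'_s` outright and `∑ q'_s²` in terms of `A(k,h)`.
-/

open Finset

namespace Dedekind

theorem two_mul_sum_Ico_id {a b : ℤ} (hab : a ≤ b) :
    2 * ∑ i ∈ Ico a b, i = b * (b - 1) - a * (a - 1) := by
  induction b, hab using Int.leInduction with
  | base => simp
  | succ n hn ih =>
    rw [← insert_Ico_right_eq_Ico_add_one hn, sum_insert right_notMem_Ico, mul_add, ih]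
    ring

theorem six_mul_sum_Ico_sq {a b : ℤ} (hab : a ≤ b) :
    6 * ∑ i ∈ Ico a b, i ^ 2 = b * (b - 1) * (2 * b - 1) - a * (a - 1) * (2 * a - 1) := by
  induction b, hab using Int.leInduction with
  | base => simp
  | succ n hn ih =>
    rw [← insert_Ico_right_eq_Ico_add_one hn, sum_insert right_notMem_Ico, mul_add, ih]
    ring

variable {h k : ℤ}

theorem not_dvd_mul_of_mem_Ico (hco : IsCoprime h k) {r : ℤ} (hr : r ∈ Ico 1 k) :
    ¬ k ∣ h * r := fun hdvd => by
  rw [mem_Ico] at hr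
  have := Int.le_of_dvd (by omega) (hco.symm.dvd_of_dvd_mul_left hdvd)
  omega

theorem mul_emod_mem_Ico (hk : 0 < k) (hco : IsCoprime h k) {r : ℤ} (hr : r ∈ Ico 1 k) :
    h * r % k ∈ Ico 1 k := by
  have hne : h * r % k ≠ 0 := fun h0 =>
    not_dvd_mul_of_mem_Ico hco hr (Int.dvd_of_emod_eq_zero h0)
  have := Int.emod_nonneg (h * r) hk.ne'
  have := Int.emod_lt_of_pos (h * r) hk
  rw [mem_Ico]
  omega

theorem sum_Ico_comp_mul_emod {M : Type*} [AddCommMonoid M] (hk : 0 < k) (hco : IsCoprime h k)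
    (f : ℤ → M) : ∑ r ∈ Ico 1 k, f (h * r % k) = ∑ r ∈ Ico 1 k, f r := by
  obtain ⟨u, v, huv⟩ := hco
  have hcancel {a b : ℤ} (hab : a * b + v * k = 1) (r : ℤ) (hr : r ∈ Ico 1 k) :
      a * (b * r % k) % k = r := by
    rw [mem_Ico] at hr
    have hr' : a * (b * r) = r + k * (-(v * r)) := by linear_combination r * hab
    rw [Int.mul_emod, Int.emod_emod_of_dvd _ dvd_rfl, ← Int.mul_emod, hr',
      Int.add_mul_emod_self_left, Int.emod_eq_of_lt (by omega) hr.2]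
  exact sum_nbij' (fun r => h * r % k) (fun r => u * r % k)
    (fun r => mul_emod_mem_Ico hk ⟨u, v, huv⟩)
    (fun r => mul_emod_mem_Ico hk ⟨h, v, by linear_combination huv⟩)
    (hcancel huv) (hcancel (by linear_combination huv)) (fun _ _ => rfl)

theorem two_mul_sum_ediv (hk : 0 < k) (hco : IsCoprime h k) :
    2 * ∑ r ∈ Ico 1 k, h * r / k = (h - 1) * (k - 1) := by
  have hquot (r : ℤ) : k * (h * r / k) = h * r - h * r % k :=
    eq_sub_of_add_eq (Int.mul_ediv_add_emod _ _)
  have hS1 := two_mul_sum_Ico_id (show 1 ≤ k by omega)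
  refine mul_left_cancel₀ hk.ne' ?_
  have hperm : ∑ r ∈ Ico 1 k, h * r % k = ∑ r ∈ Ico 1 k, r := sum_Ico_comp_mul_emod hk hco id
  rw [mul_left_comm, mul_sum, sum_congr rfl fun r _ => hquot r, sum_sub_distrib, ← mul_sum, hperm]
  linear_combination (h - 1) * hS1

theorem six_mul_sq_mul_sum_sq_ediv (hk : 0 < k) (hco : IsCoprime h k) :
    6 * (k ^ 2 * ∑ r ∈ Ico 1 k, (h * r / k) ^ 2)
      = (1 - h ^ 2) * (k * (k - 1) * (2 * k - 1))
        + 12 * h * k * ∑ r ∈ Ico 1 k, r * (h * r / k) := by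
  have hsq (r : ℤ) : k ^ 2 * (h * r / k) ^ 2
      = (1 - h ^ 2) * r ^ 2 + ((h * r % k) ^ 2 - r ^ 2) + 2 * h * k * (r * (h * r / k)) := by
    linear_combination (k * (h * r / k) - h * r - h * r % k) * Int.mul_ediv_add_emod (h * r) k
  have hS2 := six_mul_sum_Ico_sq (show 1 ≤ k by omega)
  rw [mul_sum, sum_congr rfl fun r _ => hsq r, sum_add_distrib, sum_add_distrib, sum_sub_distrib,
    sum_Ico_comp_mul_emod hk hco (· ^ 2), sub_self, ← mul_sum, ← mul_sum]
  linear_combination (1 - h ^ 2) * hS2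

theorem two_mul_sum_mul_ediv (hh : 0 < h) (hk : 0 < k) (hco : IsCoprime h k) :
    2 * ∑ r ∈ Ico 1 k, r * (h * r / k)
      = (h - 1) * (k * (k - 1)) - ∑ s ∈ Ico 1 h, (k * s / h) ^ 2 - ∑ s ∈ Ico 1 h, k * s / h := by
  have hlattice (r s : ℤ) :
      r ∈ Ico 1 k ∧ s ∈ Icc 1 (h * r / k) ↔ r ∈ Ioo (k * s / h) k ∧ s ∈ Ico 1 h := by
    -- coprimality rules out `ks = hr`, so `s ≤ ⌊hr/k⌋` is the same as `ks < hr`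
    simp only [mem_Ico, mem_Icc, mem_Ioo, Int.le_ediv_iff_mul_le hk, Int.ediv_lt_iff_lt_mul hh]
    constructor
    · rintro ⟨hr, hs1, hsr⟩
      have hne : s * k ≠ h * r := fun heq =>
        not_dvd_mul_of_mem_Ico hco (mem_Ico.2 hr) ⟨s, by linear_combination -heq⟩
      have hlt : k * s < r * h := by
        rw [mul_comm k s, mul_comm r h]
        exact lt_of_le_of_ne hsr hne
      refine ⟨⟨hlt, hr.2⟩, hs1, ?_⟩
      nlinarith
    · rintro ⟨⟨hsr, hr⟩, hs1, hs⟩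
      refine ⟨⟨by nlinarith, hr⟩, hs1, by linarith⟩
  have hcount : ∀ r ∈ Ico 1 k, r * (h * r / k) = ∑ s ∈ Icc 1 (h * r / k), r := by
    intro r hr
    have hq : 0 ≤ h * r / k := Int.ediv_nonneg (by nlinarith [(mem_Ico.1 hr).1]) hk.le
    rw [sum_const, nsmul_eq_mul, Int.card_Icc_of_le _ _ (by omega)]
    ring
  have htail : ∀ s ∈ Ico 1 h, 2 * ∑ r ∈ Ioo (k * s / h) k, r
      = k * (k - 1) - (k * s / h) ^ 2 - k * s / h := by
    intro s hs
    have hq : k * s / h < k := by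
      rw [Int.ediv_lt_iff_lt_mul hh]
      nlinarith [(mem_Ico.1 hs).2]
    rw [← Ico_add_one_left_eq_Ioo, two_mul_sum_Ico_id (by omega)]
    ring
  rw [sum_congr rfl hcount, sum_comm' hlattice, mul_sum, sum_congr rfl htail, sum_sub_distrib,
    sum_sub_distrib, sum_const, nsmul_eq_mul, Int.card_Ico_of_le 1 h (by omega)]

theorem sum_mul_ediv_reciprocity (hh : 0 < h) (hk : 0 < k) (hco : IsCoprime h k) :
    12 * (h * ∑ r ∈ Ico 1 k, r * (h * r / k) + k * ∑ s ∈ Ico 1 h, s * (k * s / h))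
      = 8 * h ^ 2 * k ^ 2 - 9 * h ^ 2 * k - 9 * h * k ^ 2 + h ^ 2 + k ^ 2 + 9 * h * k - 1 := by
  have hA := two_mul_sum_mul_ediv hh hk hco
  have hQ2 := six_mul_sq_mul_sum_sq_ediv hh hco.symm
  have hQ1 := two_mul_sum_ediv hh hco.symm
  refine mul_left_cancel₀ hh.ne' ?_
  linear_combination 6 * h ^ 2 * hA - hQ2 - 3 * h ^ 2 * hQ1

theorem mul_dedekindSum (hk : 0 < k) :
    12 * k * dedekindSum h k = 2 * h * (k - 1) * (2 * k - 1) - 3 * k * (k - 1)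
      - 12 * ((∑ r ∈ Ico 1 k, r * (h * r / k) : ℤ) : ℝ) := by
  have hk' : (k : ℝ) ≠ 0 := by exact_mod_cast hk.ne'
  have hterm (r : ℤ) : 12 * k * ((r / k) * ((h * r) / k - ⌊(h * r : ℝ) / k⌋ - 1 / 2))
      = 12 * h * (r : ℝ) ^ 2 / k - 6 * r - 12 * ((r * (h * r / k) : ℤ) : ℝ) := by
    rw [← Int.cast_mul, Int.floor_div_cast_of_nonneg hk.le, Int.floor_intCast]
    push_cast
    field_simp
    ring
  have hS1 := congrArg (Int.cast : ℤ → ℝ) (two_mul_sum_Ico_id (show 1 ≤ k by omega))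
  have hS2 := congrArg (Int.cast : ℤ → ℝ) (six_mul_sum_Ico_sq (show 1 ≤ k by omega))
  push_cast at hS1 hS2
  rw [dedekindSum, mul_sum, sum_congr rfl fun r _ => hterm r, sum_sub_distrib, sum_sub_distrib,
    ← sum_div, ← mul_sum, ← mul_sum, ← mul_sum, Int.cast_sum]
  field_simp
  linear_combination 2 * h * hS2 - 3 * k * hS1

end Dedekind

theorem dedekind_reciprocity (h k : ℤ) (hh : 0 < h) (hk : 0 < k) (hco : IsCoprime h k) :
    dedekindSum h k + dedekindSum k h =
      ((h : ℝ) ^ 2 + k ^ 2 - 3 * h * k + 1) / (12 * h * k) := by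
  have hs := Dedekind.mul_dedekindSum (h := h) hk
  have hs' := Dedekind.mul_dedekindSum (h := k) hh
  have hA := congrArg (Int.cast : ℤ → ℝ) (Dedekind.sum_mul_ediv_reciprocity hh hk hco)
  push_cast at hA hs hs'
  have hh' : (0 : ℝ) < h := by exact_mod_cast hh
  have hk' : (0 : ℝ) < k := by exact_mod_cast hk
  rw [eq_div_iff (by positivity)]
  linear_combination h * hs + k * hs' - hA
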